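/- Let T be a tree. Then the independence number of T satisfies α(T) = |Supp(T)| + |V(F_N(T))|/2, where F_N(T) is the subgraph of T induced on the vertices outside the closed neighborhood of Supp(T). -/

import Mathlib

open SimpleGraph Matrix

attribute [local instance] Classical.propDecidable

noncomputable section

variable {V : Type*}

/-- A graph is singular if its adjacency matrix (over ℝ) has nontrivial kernel. -/
def IsSingular [Fintype V] (G : SimpleGraph V) : Prop :=
  ∃ x : V → ℝ, x ≠ 0 ∧ G.adjMatrix ℝ *ᵥ x = 0

/-- The support of the null space of the adjacency matrix. -/
def nullSupp [Fintype V] (G : SimpleGraph V) : Set V :=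
  {v | ∃ x : V → ℝ, G.adjMatrix ℝ *ᵥ x = 0 ∧ x v ≠ 0}

/-- The core: all neighbours of supported vertices. -/
def core [Fintype V] (G : SimpleGraph V) : Set V :=
  ⋃ v ∈ nullSupp G, G.neighborSet v

/-- Vertex set of the N-forest: complement of the closed neighbourhood of the support. -/
def fnVerts [Fintype V] (G : SimpleGraph V) : Set V :=
  (nullSupp G ∪ core G)ᶜ

/-- A matching as a set of pairwise disjoint edges of `G`. -/
def IsMatchingSet (G : SimpleGraph V) (M : Set (Sym2 V)) : Prop :=
  M ⊆ G.edgeSet ∧ M.Pairwise fun e f => ∀ v : V, ¬(v ∈ e ∧ v ∈ f)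

/-- `M` saturates `v`. -/
def Saturates (M : Set (Sym2 V)) (v : V) : Prop := ∃ e ∈ M, v ∈ e

/-- A perfect matching saturates every vertex. -/
def IsPerfectMatchingSet (G : SimpleGraph V) (M : Set (Sym2 V)) : Prop :=
  IsMatchingSet G M ∧ ∀ v : V, Saturates M v

/-- Matching number. -/
def matchNum [Fintype V] (G : SimpleGraph V) : ℕ :=
  sSup {n | ∃ M : Set (Sym2 V), IsMatchingSet G M ∧ M.ncard = n}

/-- Maximum matchings. -/
def IsMaxMatching [Fintype V] (G : SimpleGraph V) (M : Set (Sym2 V)) : Prop :=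
  IsMatchingSet G M ∧ M.ncard = matchNum G

/-- Independent set of vertices. -/
def IsIndepSet (G : SimpleGraph V) (I : Set V) : Prop :=
  I.Pairwise fun a b => ¬ G.Adj a b

/-- Independence number. -/
def indepNum [Fintype V] (G : SimpleGraph V) : ℕ :=
  sSup {n | ∃ I : Set V, _root_.IsIndepSet G I ∧ I.ncard = n}

/-- Maximum independent sets. -/
def IsMaxIndep [Fintype V] (G : SimpleGraph V) (I : Set V) : Prop :=
  _root_.IsIndepSet G I ∧ I.ncard = _root_.indepNum G

/-- The graph `G` with all vertices in `S` deleted (kept as isolated vertices). -/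
def avoid (G : SimpleGraph V) (S : Set V) : SimpleGraph V where
  Adj a b := G.Adj a b ∧ a ∉ S ∧ b ∉ S
  symm := ⟨fun a b h => ⟨h.1.symm, h.2.2, h.2.1⟩⟩
  loopless := ⟨fun a h => G.loopless.irrefl a h.1⟩

/-- `G` is unicyclic: connected with as many edges as vertices. -/
def IsUnicyclic [Fintype V] (G : SimpleGraph V) : Prop :=
  G.Connected ∧ G.edgeFinset.card = Fintype.card V

/-- `C` is the vertex set of the (unique) cycle of `G`:
the induced subgraph on `C` is connected and 2-regular. -/
def IsCycleVerts [Fintype V] (G : SimpleGraph V) (C : Set V) : Prop :=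
  C.Nonempty ∧ (G.induce C).Connected ∧ ∀ v : C, (G.induce C).degree v = 2

/-- Vertices of the pendant tree of `G` at the cycle vertex `v`: all vertices
reachable from `v` after deleting the other cycle vertices. -/
def pendantVerts (G : SimpleGraph V) (C : Set V) (v : V) : Set V :=
  {u | (avoid G (C \ {v})).Reachable v u}

lemma mem_pendantVerts_self (G : SimpleGraph V) (C : Set V) (v : V) :
    v ∈ pendantVerts G C v := Reachable.refl v

/-- The pendant tree of `G` at `v` (as an induced subgraph). -/
def pendantTree (G : SimpleGraph V) (C : Set V) (v : V) :
    SimpleGraph (pendantVerts G C v) := G.induce (pendantVerts G C v)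

/-- The rest of the graph, `G − G{v}`. -/
def pendantRest (G : SimpleGraph V) (C : Set V) (v : V) :
    SimpleGraph ((pendantVerts G C v)ᶜ : Set V) := G.induce (pendantVerts G C v)ᶜ

/-- `v` is matched in a graph `H`: every maximum matching of `H` saturates `v`. -/
def MatchedIn {W : Type*} [Fintype W] (H : SimpleGraph W) (w : W) : Prop :=
  ∀ M : Set (Sym2 W), IsMaxMatching H M → Saturates M w

/-- A unicyclic graph is of Type I if some cycle vertex is matched in its pendant tree. -/
def TypeI [Fintype V] (G : SimpleGraph V) (C : Set V) : Prop :=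
  ∃ v ∈ C, MatchedIn (pendantTree G C v) ⟨v, mem_pendantVerts_self G C v⟩

/-- Type II: every cycle vertex is missed by some maximum matching of its pendant tree. -/
def TypeII [Fintype V] (G : SimpleGraph V) (C : Set V) : Prop :=
  ∀ v ∈ C, ¬ MatchedIn (pendantTree G C v) ⟨v, mem_pendantVerts_self G C v⟩

end

/-!
Induction over forests. Take a pendant vertex `u` with neighbour `w` and pass to
`avoid G {u, w}`, where `u` and `w` become isolated: this raises `α` by one. Kernel vectors of the
adjacency matrix restrict and extend across this step (a kernel vector always vanishes at `w`),
so the support changes only by adding `u` and `w`. If `u` is supported, `w` is a neighbour of the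
support and the N-forest is unchanged. If not, `w` has no supported neighbour either: restricting
a kernel vector to the component of such a neighbour `z` and extending it back would be nonzero
at `u`. Then `u` and `w` both lie in the N-forest, which loses exactly these two vertices.
-/

section IndependentSets

variable {V : Type*} {G H : SimpleGraph V} {I : Set V} {u w : V}

lemma IsIndepSet.anti (hle : H ≤ G) (hI : _root_.IsIndepSet G I) : _root_.IsIndepSet H I :=
  fun _ ha _ hb hab hadj => hI ha hb hab (hle hadj)

lemma IsIndepSet.insert_of_forall_not_adj (hI : _root_.IsIndepSet G I) (hu : ∀ z, ¬ G.Adj u z) :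
    _root_.IsIndepSet G (insert u I) :=
  Set.pairwise_insert.mpr ⟨hI, fun z _ _ => ⟨hu z, fun h => hu z h.symm⟩⟩

lemma bddAbove_indepSet_ncard [Finite V] (G : SimpleGraph V) :
    BddAbove {n | ∃ I : Set V, _root_.IsIndepSet G I ∧ I.ncard = n} :=
  ⟨Nat.card V, by rintro _ ⟨I, -, rfl⟩; exact Set.ncard_le_card I⟩

lemma IsIndepSet.ncard_le_indepNum [Fintype V] (hI : _root_.IsIndepSet G I) :
    I.ncard ≤ _root_.indepNum G :=
  le_csSup (bddAbove_indepSet_ncard G) ⟨I, hI, rfl⟩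

lemma exists_isMaxIndep [Fintype V] (G : SimpleGraph V) : ∃ I, IsMaxIndep G I :=
  Nat.sSup_mem (s := {n | ∃ I : Set V, _root_.IsIndepSet G I ∧ I.ncard = n})
    ⟨0, ∅, Set.pairwise_empty _, Set.ncard_empty V⟩ (bddAbove_indepSet_ncard G)

lemma indepNum_bot [Fintype V] : _root_.indepNum (⊥ : SimpleGraph V) = Nat.card V := by
  refine le_antisymm ?_ ?_
  · obtain ⟨I, -, hI⟩ := exists_isMaxIndep (⊥ : SimpleGraph V)
    exact hI ▸ Set.ncard_le_card I
  · have hindep : _root_.IsIndepSet (⊥ : SimpleGraph V) Set.univ := fun _ _ _ _ _ h => h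
    simpa using hindep.ncard_le_indepNum

end IndependentSets

section Avoid

variable {V : Type*} {G : SimpleGraph V} {S I : Set V} {u w : V}

@[simp]
lemma avoid_adj {a b : V} : (avoid G S).Adj a b ↔ G.Adj a b ∧ a ∉ S ∧ b ∉ S := Iff.rfl

lemma avoid_le : avoid G S ≤ G := fun _ _ h => h.1

lemma avoid_lt (huw : G.Adj u w) (hu : u ∈ S) : avoid G S < G :=
  avoid_le.lt_of_ne fun h => by rw [← h] at huw; exact huw.2.1 hu

lemma adj_iff_of_neighborSet_eq_singleton (hleaf : G.neighborSet u = {w}) {v : V} :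
    G.Adj u v ↔ v = w := by
  rw [← mem_neighborSet, hleaf, Set.mem_singleton_iff]

lemma adj_of_neighborSet_eq_singleton (hleaf : G.neighborSet u = {w}) : G.Adj u w :=
  (adj_iff_of_neighborSet_eq_singleton hleaf).mpr rfl

lemma IsIndepSet.insert_sdiff_of_neighborSet_eq_singleton (hleaf : G.neighborSet u = {w})
    (hI : _root_.IsIndepSet (avoid G {u, w}) I) : _root_.IsIndepSet G (insert u (I \ {w})) := by
  have hu : ∀ {v}, G.Adj u v ↔ v = w := adj_iff_of_neighborSet_eq_singleton hleaf
  refine Set.pairwise_insert.mpr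
    ⟨?_, fun b hb _ => ⟨fun h => hb.2 (hu.mp h), fun h => hb.2 (hu.mp h.symm)⟩⟩
  intro a ha b hb hab hadj
  have hau : a ≠ u := by rintro rfl; exact hb.2 (hu.mp hadj)
  have hbu : b ≠ u := by rintro rfl; exact ha.2 (hu.mp hadj.symm)
  exact hI ha.1 hb.1 hab ⟨hadj, by simp [hau, ha.2], by simp [hbu, hb.2]⟩

lemma indepNum_avoid_of_neighborSet_eq_singleton [Fintype V] (hleaf : G.neighborSet u = {w}) :
    _root_.indepNum (avoid G {u, w}) = _root_.indepNum G + 1 := by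
  have huw : G.Adj u w := adj_of_neighborSet_eq_singleton hleaf
  have hw : ∀ z, ¬ (avoid G {u, w}).Adj w z := fun _ h => h.2.1 (by simp)
  refine le_antisymm ?_ ?_
  · obtain ⟨I, hI, hIcard⟩ := exists_isMaxIndep (avoid G {u, w})
    have hJ := hI.insert_sdiff_of_neighborSet_eq_singleton hleaf
    have hsub : I ⊆ insert w (insert u (I \ {w})) := fun v hv => by
      by_cases hvw : v = w <;> simp [hvw, hv]
    calc _root_.indepNum (avoid G {u, w}) = I.ncard := hIcard.symm
      _ ≤ (insert w (insert u (I \ {w}))).ncard := Set.ncard_le_ncard hsub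
      _ ≤ (insert u (I \ {w})).ncard + 1 := Set.ncard_insert_le _ _
      _ ≤ _root_.indepNum G + 1 := by grw [hJ.ncard_le_indepNum]
  · obtain ⟨I, hI, hIcard⟩ := exists_isMaxIndep G
    set J := insert u (I \ {w})
    have hJ : _root_.IsIndepSet G J :=
      (hI.anti avoid_le).insert_sdiff_of_neighborSet_eq_singleton hleaf
    have hwJ : w ∉ J := by simp [J, huw.ne']
    have hIJ : I.ncard ≤ J.ncard := by
      by_cases hwI : w ∈ I
      · have huI : u ∉ I \ {w} := fun hu => hI hu.1 hwI huw.ne huw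
        rw [Set.ncard_insert_of_notMem huI, Set.ncard_sdiff_singleton_add_one hwI]
      · exact Set.ncard_le_ncard (by simp [J, Set.sdiff_singleton_eq_self hwI])
    calc _root_.indepNum G + 1 ≤ J.ncard + 1 := by omega
      _ = (insert w J).ncard := (Set.ncard_insert_of_notMem hwJ).symm
      _ ≤ _root_.indepNum (avoid G {u, w}) :=
        ((hJ.anti avoid_le).insert_of_forall_not_adj hw).ncard_le_indepNum

end Avoid

section NullSpace

variable {V : Type*} [Fintype V] {G H : SimpleGraph V} {S : Set V} {u w v : V}

lemma mem_nullSupp_of_forall_not_adj (h : ∀ z, ¬ H.Adj v z) : v ∈ nullSupp H := by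
  refine ⟨Pi.single v 1, ?_, by simp⟩
  have h' : ∀ j, ¬ H.Adj j v := fun j hj => h j hj.symm
  funext j
  simp [h']

lemma mem_nullSupp_avoid (hv : v ∈ S) : v ∈ nullSupp (avoid G S) :=
  mem_nullSupp_of_forall_not_adj fun _ h => h.2.1 hv

lemma avoid_mulVec_apply_of_mem (hv : v ∈ S) (y : V → ℝ) :
    ((avoid G S).adjMatrix ℝ *ᵥ y) v = 0 := by
  simp [mulVec, dotProduct, hv]

lemma avoid_mulVec_apply_of_notMem (hv : v ∉ S) (y : V → ℝ) :
    ((avoid G S).adjMatrix ℝ *ᵥ y) v = (G.adjMatrix ℝ *ᵥ Sᶜ.indicator y) v := by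
  simp only [mulVec, dotProduct, adjMatrix_apply]
  refine Finset.sum_congr rfl fun z _ => ?_
  by_cases hz : z ∈ S <;> simp [hv, hz]

lemma mulVec_indicator_reachable_eq_zero {y : V → ℝ} (hy : H.adjMatrix ℝ *ᵥ y = 0) (z : V) :
    H.adjMatrix ℝ *ᵥ {v | H.Reachable z v}.indicator y = 0 := by
  funext v
  simp only [mulVec, dotProduct, Pi.zero_apply]
  by_cases hv : H.Reachable z v
  · refine (Finset.sum_congr rfl fun t _ => ?_).trans (congrFun hy v)
    by_cases ht : H.Adj v t
    · have ht' : t ∈ {v | H.Reachable z v} := hv.trans ht.reachable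
      simp [ht']
    · simp [ht]
  · refine Finset.sum_eq_zero fun t _ => ?_
    by_cases ht : H.Adj v t
    · have ht' : t ∉ {v | H.Reachable z v} := fun h => hv (h.trans ht.symm.reachable)
      simp [ht']
    · simp [ht]

lemma mem_core_iff : v ∈ core H ↔ ∃ s ∈ nullSupp H, H.Adj s v := by
  simp [core]

section Leaf

variable (hleaf : G.neighborSet u = {w})
include hleaf

lemma mulVec_eq_zero_apply_of_neighborSet_eq_singleton {x : V → ℝ}
    (hx : G.adjMatrix ℝ *ᵥ x = 0) : x w = 0 := by
  simpa [mulVec, dotProduct, adj_iff_of_neighborSet_eq_singleton hleaf] using congrFun hx u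

lemma notMem_nullSupp_of_neighborSet_eq_singleton : w ∉ nullSupp G :=
  fun ⟨_, hx, hxw⟩ => hxw (mulVec_eq_zero_apply_of_neighborSet_eq_singleton hleaf hx)

lemma avoid_mulVec_indicator_eq_zero {x : V → ℝ} (hx : G.adjMatrix ℝ *ᵥ x = 0) :
    (avoid G {u, w}).adjMatrix ℝ *ᵥ ({u, w}ᶜ : Set V).indicator x = 0 := by
  funext v
  by_cases hv : v ∈ ({u, w} : Set V)
  · exact avoid_mulVec_apply_of_mem hv _
  rw [avoid_mulVec_apply_of_notMem hv, Set.indicator_indicator, Set.inter_self]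
  refine (Finset.sum_congr rfl fun z _ => ?_).trans (congrFun hx v)
  by_cases hz : z ∈ ({u, w} : Set V)
  · rcases hz with rfl | rfl
    · have hvz : ¬ G.Adj v z := fun h =>
        hv (by simp [(adj_iff_of_neighborSet_eq_singleton hleaf).mp h.symm])
      simp [hvz]
    · simp [mulVec_eq_zero_apply_of_neighborSet_eq_singleton hleaf hx]
  · rw [Set.indicator_of_mem hz]

lemma exists_mulVec_eq_zero_of_avoid {y : V → ℝ}
    (hy : (avoid G {u, w}).adjMatrix ℝ *ᵥ y = 0) :
    ∃ x, G.adjMatrix ℝ *ᵥ x = 0 ∧ ∀ v ∉ ({u, w} : Set V), x v = y v := by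
  have hu : ∀ {v}, G.Adj u v ↔ v = w := adj_iff_of_neighborSet_eq_singleton hleaf
  set y₀ := ({u, w}ᶜ : Set V).indicator y
  -- the value at `u` makes row `w` vanish; row `u` only sees `y₀ w = 0`
  refine ⟨y₀ + Pi.single u (-(G.adjMatrix ℝ *ᵥ y₀) w), ?_, fun v hv => ?_⟩
  · funext v
    rw [mulVec_add, mulVec_single]
    by_cases hvw : v = w
    · subst hvw
      simp [(hu.mpr rfl).symm]
    have hvu : ¬ G.Adj v u := fun h => hvw (hu.mp h.symm)
    simp only [Pi.add_apply, Pi.smul_apply, col_apply, adjMatrix_apply, hvu, if_false,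
      op_smul_eq_mul, zero_mul, add_zero, Pi.zero_apply]
    by_cases hv : v ∈ ({u, w} : Set V)
    · obtain rfl : v = u := by simpa [hvw] using hv
      simp [mulVec, dotProduct, hu, y₀]
    · rw [← avoid_mulVec_apply_of_notMem hv, hy, Pi.zero_apply]
  · have hvu : v ≠ u := fun h => hv (by simp [h])
    simp [y₀, Set.indicator_of_mem (show v ∈ ({u, w}ᶜ : Set V) from hv), hvu]

lemma mem_nullSupp_avoid_iff (hv : v ∉ ({u, w} : Set V)) :
    v ∈ nullSupp (avoid G {u, w}) ↔ v ∈ nullSupp G := by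
  constructor
  · rintro ⟨y, hy, hyv⟩
    obtain ⟨x, hx, hxy⟩ := exists_mulVec_eq_zero_of_avoid hleaf hy
    exact ⟨x, hx, hxy v hv ▸ hyv⟩
  · rintro ⟨x, hx, hxv⟩
    exact ⟨_, avoid_mulVec_indicator_eq_zero hleaf hx, by rwa [Set.indicator_of_mem hv]⟩

lemma nullSupp_avoid : nullSupp (avoid G {u, w}) = insert u (insert w (nullSupp G)) := by
  ext v
  by_cases hv : v ∈ ({u, w} : Set V)
  · simp only [mem_nullSupp_avoid hv, true_iff]
    rcases hv with rfl | rfl <;> simp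
  · rw [mem_nullSupp_avoid_iff hleaf hv]
    simp only [Set.mem_insert_iff, Set.mem_singleton_iff, not_or] at hv
    simp [hv]

lemma mem_core_avoid_iff (hv : v ∉ ({u, w} : Set V)) :
    v ∈ core (avoid G {u, w}) ↔ v ∈ core G := by
  simp only [mem_core_iff]
  constructor
  · rintro ⟨s, hs, hsv⟩
    exact ⟨s, (mem_nullSupp_avoid_iff hleaf hsv.2.1).mp hs, hsv.1⟩
  · rintro ⟨s, hs, hsv⟩
    have hsw : s ≠ w := by rintro rfl; exact notMem_nullSupp_of_neighborSet_eq_singleton hleaf hs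
    have hsu : s ≠ u := by
      rintro rfl; exact hv (by simp [(adj_iff_of_neighborSet_eq_singleton hleaf).mp hsv])
    have hsS : s ∉ ({u, w} : Set V) := by simp [hsu, hsw]
    exact ⟨s, (mem_nullSupp_avoid_iff hleaf hsS).mpr hs, hsv, hsS, hv⟩

lemma fnVerts_avoid : fnVerts (avoid G {u, w}) = fnVerts G \ {u, w} := by
  ext v
  by_cases hv : v ∈ ({u, w} : Set V)
  · simp [fnVerts, mem_nullSupp_avoid hv, hv]
  · simp only [fnVerts, Set.mem_sdiff, Set.mem_compl_iff, Set.mem_union,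
      mem_nullSupp_avoid_iff hleaf hv, mem_core_avoid_iff hleaf hv, hv, not_false_eq_true, and_true]

lemma notMem_core_of_neighborSet_eq_singleton : u ∉ core G := by
  rw [mem_core_iff]
  rintro ⟨s, hs, hsu⟩
  obtain rfl := (adj_iff_of_neighborSet_eq_singleton hleaf).mp hsu.symm
  exact notMem_nullSupp_of_neighborSet_eq_singleton hleaf hs

end Leaf

end NullSpace

section Acyclic

variable {V : Type*} {G : SimpleGraph V} {S : Set V} {u w : V}

lemma SimpleGraph.IsAcyclic.not_reachable_avoid (hG : G.IsAcyclic) (hw : w ∈ S) {z b : V}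
    (hz : G.Adj w z) (hb : G.Adj w b) (hzb : z ≠ b) : ¬ (avoid G S).Reachable z b := by
  intro hreach
  have hle : avoid G S ≤ G.deleteEdges {s(w, z)} := fun a c hac => by
    refine (deleteEdges_adj ..).mpr ⟨hac.1, ?_⟩
    intro h
    rcases Sym2.eq_iff.mp h with ⟨rfl, -⟩ | ⟨-, rfl⟩
    exacts [hac.2.1 hw, hac.2.2 hw]
  have hwb : (G.deleteEdges {s(w, z)}).Adj w b := by simp [hb, hzb.symm, hz.ne]
  exact isAcyclic_iff_forall_adj_isBridge.mp hG hz (hwb.reachable.trans (hreach.symm.mono hle))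

lemma SimpleGraph.IsAcyclic.exists_neighborSet_eq_singleton [Finite V] (hG : G.IsAcyclic)
    (hne : G ≠ ⊥) : ∃ u w, G.neighborSet u = {w} := by
  obtain ⟨a, b, hab⟩ := ne_bot_iff_exists_adj.mp hne
  have : Nonempty V := ⟨a⟩
  obtain ⟨u, v, p, hp, hmax⟩ := Walk.exists_isPath_forall_isPath_length_le_length G
  have hnil : ¬ p.Nil := Walk.not_nil_iff_lt_length.mpr (hmax _ _ _ (Walk.IsPath.of_adj hab))
  refine ⟨u, p.snd, Set.eq_singleton_iff_unique_mem.mpr ⟨p.adj_snd hnil, fun w hw => ?_⟩⟩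
  apply hG.eq_snd_of_adj_start hp hw
  by_contra hwp
  have := hmax _ _ _ (hp.cons (h := (mem_neighborSet ..).mp hw |>.symm) hwp)
  simp at this

lemma SimpleGraph.IsAcyclic.notMem_core_of_neighborSet_eq_singleton [Fintype V] (hG : G.IsAcyclic)
    (hleaf : G.neighborSet u = {w}) (hu : u ∉ nullSupp G) : w ∉ core G := by
  have huw : G.Adj u w := adj_of_neighborSet_eq_singleton hleaf
  rw [mem_core_iff]
  rintro ⟨z, hz, hzw⟩
  have hzS : z ∉ ({u, w} : Set V) := by
    simp only [Set.mem_insert_iff, Set.mem_singleton_iff, not_or]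
    exact ⟨by rintro rfl; exact hu hz, hzw.ne⟩
  obtain ⟨y, hy, hyz⟩ := (mem_nullSupp_avoid_iff hleaf hzS).mpr hz
  -- By acyclicity the component of `z` contains no other neighbour of `w`, so row `w` of the
  -- extension reads `x u + y z = 0`.
  obtain ⟨x, hx, hxy⟩ :=
    exists_mulVec_eq_zero_of_avoid hleaf (mulVec_indicator_reachable_eq_zero hy z)
  have hxz : x z = y z := by simp [hxy z hzS]
  have hrow : x u + x z = 0 := by
    refine Eq.trans ?_ (congrFun hx w)
    simp only [mulVec, dotProduct]
    rw [Fintype.sum_eq_add u z (by rintro rfl; exact hu hz) ?_]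
    · simp [huw.symm, hzw.symm]
    rintro t ⟨htu, htz⟩
    by_cases ht : G.Adj w t
    · have htS : t ∉ ({u, w} : Set V) := by simp [htu, ht.ne']
      have hzt : ¬ (avoid G {u, w}).Reachable z t :=
        hG.not_reachable_avoid (by simp) hzw.symm ht (Ne.symm htz)
      simp [hxy t htS, hzt]
    · simp [ht]
  exact hu ⟨x, hx, fun hxu => hyz (by linarith)⟩

end Acyclic

section Forest

variable {V : Type*} [Fintype V] {G : SimpleGraph V} {u w : V}

lemma indepNum_formula_of_avoid (hG : G.IsAcyclic) (hleaf : G.neighborSet u = {w})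
    (ih : _root_.indepNum (avoid G {u, w}) =
      (nullSupp (avoid G {u, w})).ncard + (fnVerts (avoid G {u, w})).ncard / 2) :
    _root_.indepNum G = (nullSupp G).ncard + (fnVerts G).ncard / 2 := by
  have huw : G.Adj u w := adj_of_neighborSet_eq_singleton hleaf
  have hw := notMem_nullSupp_of_neighborSet_eq_singleton hleaf
  rw [indepNum_avoid_of_neighborSet_eq_singleton hleaf, nullSupp_avoid hleaf,
    fnVerts_avoid hleaf] at ih
  by_cases hu : u ∈ nullSupp G
  · have hdisj : fnVerts G \ {u, w} = fnVerts G := by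
      have hwcore : w ∈ core G := mem_core_iff.mpr ⟨u, hu, huw⟩
      refine sdiff_eq_self_iff_disjoint.mpr (Set.disjoint_left.mpr fun v hv hvfn => ?_)
      rcases hv with rfl | rfl
      exacts [hvfn (Or.inl hu), hvfn (Or.inr hwcore)]
    rw [Set.insert_eq_of_mem (Set.mem_insert_of_mem _ hu), Set.ncard_insert_of_notMem hw,
      hdisj] at ih
    omega
  · have hsub : {u, w} ⊆ fnVerts G := by
      rintro v (rfl | rfl)
      · exact fun h => h.elim hu (notMem_core_of_neighborSet_eq_singleton hleaf)
      · exact fun h => h.elim hw (hG.notMem_core_of_neighborSet_eq_singleton hleaf hu)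
    have hfn := Set.ncard_sdiff_add_ncard_of_subset hsub
    rw [Set.ncard_pair huw.ne] at hfn
    rw [Set.ncard_insert_of_notMem (by simp [huw.ne, hu]), Set.ncard_insert_of_notMem hw] at ih
    omega

theorem indepNum_eq_of_isAcyclic (hG : G.IsAcyclic) :
    _root_.indepNum G = (nullSupp G).ncard + (fnVerts G).ncard / 2 := by
  induction G using WellFoundedLT.induction with
  | _ G ih =>
    rcases eq_or_ne G ⊥ with rfl | hne
    · have hS : nullSupp (⊥ : SimpleGraph V) = Set.univ :=
        Set.eq_univ_of_forall fun _ => mem_nullSupp_of_forall_not_adj fun _ h => h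
      simp [indepNum_bot, hS, fnVerts]
    obtain ⟨u, w, hleaf⟩ := hG.exists_neighborSet_eq_singleton hne
    have huw : G.Adj u w := adj_of_neighborSet_eq_singleton hleaf
    exact indepNum_formula_of_avoid hG hleaf
      (ih _ (avoid_lt huw (by simp)) (hG.anti avoid_le))

end Forest

theorem indepNum_tree_formula {V : Type*} [Fintype V] (G : SimpleGraph V) (hT : G.IsTree) :
    _root_.indepNum G = (nullSupp G).ncard + (fnVerts G).ncard / 2 :=
  indepNum_eq_of_isAcyclic hT.isAcyclic
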